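/- The minimum, over all all-pairs sets of paths 𝒫 in Q_n, of the vertex congestion of 𝒫 equals 2^{n−1}·(n+2). In particular, there exists an all-pairs set of paths in Q_n with vertex congestion exactly 2^{n−1}·(n+2), and every all-pairs set of paths in Q_n has vertex congestion at least 2^{n−1}·(n+2). -/

import Mathlib

/-!
A path from `u` to `v` in `Q_n` has at least `d(u, v) + 1` vertices, `d` the Hamming distance,
and the congestions of all vertices add up to the total number of path vertices, which is
therefore at least `∑_{u,v} (d(u, v) + 1) = 2^n · 2^{n-1} (n + 2)`; so some vertex has congestion
at least the average `2^{n-1} (n + 2)`. Conversely, the paths that change the differing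
coordinates one at a time are geodesics and commute with the translations `x ↦ x + t` of
`(ℤ/2)^n`, which act transitively on the vertices; so their congestion is the same at every
vertex and hence equal to the average.
-/

open Finset

lemma hammingDist_lt_length {ι : Type*} [Fintype ι] {β : ι → Type*} [∀ i, DecidableEq (β i)]
    {l : List (∀ i, β i)} (hl : l.IsChain fun x y => hammingDist x y ≤ 1) {u v : ∀ i, β i}
    (hu : l.head? = some u) (hv : l.getLast? = some v) : hammingDist u v < l.length := by
  induction l generalizing u with
  | nil => simp at hu
  | cons a l ih =>
    rw [List.head?_cons, Option.some_inj] at hu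
    subst hu
    cases l with
    | nil => simp_all
    | cons b l =>
      rw [List.isChain_cons_cons] at hl
      have hbv := ih hl.2 rfl (by simpa using hv)
      have := hammingDist_triangle a b v
      simp only [List.length_cons] at hbv ⊢
      omega

section CoordWalk

variable {ι β : Type*} [DecidableEq ι] [AddCommGroup β]

lemma hammingNorm_single [Fintype ι] [DecidableEq β] (i : ι) {c : β} (hc : c ≠ 0) :
    hammingNorm (Pi.single i c : ι → β) = 1 := by
  rw [hammingNorm, Finset.card_eq_one]
  exact ⟨i, by ext j; by_cases h : j = i <;> simp [h, hc]⟩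

lemma hammingDist_add_single_right [Fintype ι] [DecidableEq β] (x : ι → β) (i : ι) {c : β}
    (hc : c ≠ 0) : hammingDist x (x + Pi.single i c) = 1 := by
  rw [hammingDist_eq_hammingNorm, neg_add_cancel_left, hammingNorm_single i hc]

def coordWalk (d : ι → β) (L : List ι) (u : ι → β) : List (ι → β) :=
  L.scanl (fun x i => x + Pi.single i (d i)) u

variable {d : ι → β} {L : List ι}

lemma coordWalk_cons (i : ι) (u : ι → β) :
    coordWalk d (i :: L) u = u :: coordWalk d L (u + Pi.single i (d i)) :=
  List.scanl_cons

lemma head?_coordWalk (u : ι → β) : (coordWalk d L u).head? = some u :=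
  List.head?_scanl

lemma getLast?_coordWalk (u : ι → β) :
    (coordWalk d L u).getLast? = some (u + (L.map fun i => Pi.single i (d i)).sum) := by
  induction L generalizing u with
  | nil => simp [coordWalk]
  | cons i L ih =>
    rw [coordWalk_cons, List.getLast?_cons, ih, List.map_cons, List.sum_cons, add_assoc,
      Option.getD_some]

lemma length_coordWalk (u : ι → β) : (coordWalk d L u).length = L.length + 1 :=
  List.length_scanl

lemma coordWalk_add_right (u t : ι → β) :
    coordWalk d L (u + t) = (coordWalk d L u).map (· + t) := by
  induction L generalizing u with
  | nil => rfl
  | cons i L ih => rw [coordWalk_cons, coordWalk_cons, add_right_comm, ih]; rfl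

lemma isChain_coordWalk [Fintype ι] [DecidableEq β] (hd : ∀ i ∈ L, d i ≠ 0) (u : ι → β) :
    (coordWalk d L u).IsChain fun x y => hammingDist x y = 1 := by
  induction L generalizing u with
  | nil => exact List.isChain_singleton u
  | cons i L ih =>
    rw [coordWalk_cons]
    refine (ih (fun j hj => hd j (List.mem_cons_of_mem i hj)) _).cons ?_
    rw [head?_coordWalk]
    rintro _ ⟨⟩
    exact hammingDist_add_single_right u i (hd i List.mem_cons_self)

lemma apply_of_mem_coordWalk {u x : ι → β} (hx : x ∈ coordWalk d L u) {j : ι} (hj : j ∉ L) :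
    x j = u j := by
  induction L generalizing u with
  | nil => simp_all [coordWalk]
  | cons i L ih =>
    rw [coordWalk_cons, List.mem_cons] at hx
    rw [List.mem_cons, not_or] at hj
    rcases hx with rfl | hx
    · rfl
    · simp [ih hx hj.2, hj.1]

lemma nodup_coordWalk (hL : L.Nodup) (hd : ∀ i ∈ L, d i ≠ 0) (u : ι → β) :
    (coordWalk d L u).Nodup := by
  induction L generalizing u with
  | nil => exact List.nodup_singleton u
  | cons i L ih =>
    rw [List.nodup_cons] at hL
    rw [coordWalk_cons, List.nodup_cons]
    refine ⟨fun hu => ?_, ih hL.2 (fun j hj => hd j (List.mem_cons_of_mem i hj)) _⟩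
    -- coordinate `i` is changed by the first step and never again
    have := apply_of_mem_coordWalk hu hL.1
    simp [hd i List.mem_cons_self] at this

end CoordWalk

section CoordPath

variable {ι β : Type*} [Fintype ι] [DecidableEq ι] [AddCommGroup β] [DecidableEq β]

/-- The order of the coordinates depends only on `v - u`, which makes `coordPath` commute with
translations. -/
noncomputable def coordPath (u v : ι → β) : List (ι → β) :=
  coordWalk (v - u) (univ.filter fun i => (v - u) i ≠ 0).toList u

lemma head?_coordPath (u v : ι → β) : (coordPath u v).head? = some u :=
  head?_coordWalk u

lemma getLast?_coordPath (u v : ι → β) : (coordPath u v).getLast? = some v := by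
  rw [coordPath, getLast?_coordWalk, Finset.sum_map_toList,
    Finset.sum_filter_of_ne fun _ _ h => by simpa using h, Finset.univ_sum_single,
    add_sub_cancel]

lemma isChain_coordPath (u v : ι → β) :
    (coordPath u v).IsChain fun x y => hammingDist x y = 1 :=
  isChain_coordWalk (fun _ hi => (mem_filter.1 (mem_toList.1 hi)).2) u

lemma nodup_coordPath (u v : ι → β) : (coordPath u v).Nodup :=
  nodup_coordWalk (nodup_toList _) (fun _ hi => (mem_filter.1 (mem_toList.1 hi)).2) u

lemma coordPath_self (u : ι → β) : coordPath u u = [u] := by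
  simp [coordPath, coordWalk]

lemma length_coordPath (u v : ι → β) : (coordPath u v).length = hammingDist u v + 1 := by
  rw [coordPath, length_coordWalk, length_toList, hammingDist_eq_hammingNorm, neg_add_eq_sub]
  rfl

lemma coordPath_add_right (u v t : ι → β) :
    coordPath (u + t) (v + t) = (coordPath u v).map (· + t) := by
  rw [coordPath, coordPath, add_sub_add_right_eq_sub, coordWalk_add_right]

end CoordPath

section Congestion

variable {α : Type*} [Fintype α] [DecidableEq α]

def congestion (P : α → α → List α) (w : α) : ℕ :=
  ∑ u, ∑ v, (P u v).count w

lemma List.sum_count_eq_length (l : List α) : ∑ a, l.count a = l.length := by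
  rw [← List.sum_toFinset_count_eq_length]
  exact (Finset.sum_subset (subset_univ _) fun a _ ha =>
    List.count_eq_zero_of_not_mem (by simpa using ha)).symm

lemma sum_congestion (P : α → α → List α) :
    ∑ w, congestion P w = ∑ u, ∑ v, (P u v).length := by
  simp only [congestion]
  rw [Finset.sum_comm]
  refine Finset.sum_congr rfl fun u _ => ?_
  rw [Finset.sum_comm]
  exact Finset.sum_congr rfl fun v _ => List.sum_count_eq_length _

lemma congestion_add_right [AddGroup α] {P : α → α → List α}
    (hP : ∀ u v t, P (u + t) (v + t) = (P u v).map (· + t)) (w t : α) :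
    congestion P (w + t) = congestion P w := by
  refine (Fintype.sum_equiv (Equiv.addRight t) _ _ fun u =>
    Fintype.sum_equiv (Equiv.addRight t) _ _ fun v => ?_).symm
  rw [Equiv.coe_addRight, hP, List.count_map_of_injective _ _ (add_left_injective t)]

end Congestion

section Hypercube

variable {ι : Type*} [Fintype ι]

lemma hammingDist_add_hammingDist_add_one (u v : ι → Bool) :
    hammingDist u v + hammingDist u (v + 1) = Fintype.card ι := by
  rw [hammingDist, hammingDist, ← card_univ, ← card_filter_add_card_filter_not (s := univ)
    (fun i => u i ≠ v i)]
  congr 2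
  ext i
  simp only [mem_filter, mem_univ, true_and, Pi.add_apply, Pi.one_apply]
  cases u i <;> cases v i <;> decide

lemma sum_hammingDist [DecidableEq ι] (u : ι → Bool) :
    ∑ v, hammingDist u v = Fintype.card ι * 2 ^ (Fintype.card ι - 1) := by
  have h : 2 * ∑ v, hammingDist u v = Fintype.card ι * 2 ^ Fintype.card ι := by
    rw [two_mul]
    nth_rw 2 [← Equiv.sum_comp (Equiv.addRight (1 : ι → Bool))]
    simp [← sum_add_distrib, hammingDist_add_hammingDist_add_one, mul_comm]
  rcases h0 : Fintype.card ι with _ | m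
  · simpa [h0] using h
  · rw [h0, pow_succ] at h
    rw [Nat.add_sub_cancel]
    linarith

lemma sum_sum_hammingDist_add_one [DecidableEq ι] [Nonempty ι] :
    ∑ u : ι → Bool, ∑ v, (hammingDist u v + 1) =
      2 ^ Fintype.card ι * (2 ^ (Fintype.card ι - 1) * (Fintype.card ι + 2)) := by
  simp only [sum_add_distrib, sum_hammingDist, sum_const, card_univ, Fintype.card_fun,
    Fintype.card_bool, smul_eq_mul, mul_one]
  obtain ⟨m, hm⟩ := Nat.exists_eq_add_of_lt (Fintype.card_pos (α := ι))
  rw [hm, zero_add, Nat.add_sub_cancel]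
  ring

lemma congestion_coordPath [DecidableEq ι] [Nonempty ι] (w : ι → Bool) :
    congestion coordPath w = 2 ^ (Fintype.card ι - 1) * (Fintype.card ι + 2) := by
  have hconst (w' : ι → Bool) : congestion coordPath w' = congestion coordPath w := by
    rw [← congestion_add_right coordPath_add_right w (w' - w), add_sub_cancel]
  have htotal := sum_congestion (coordPath (β := Bool) (ι := ι))
  simp only [hconst, length_coordPath, sum_sum_hammingDist_add_one, sum_const, card_univ,
    Fintype.card_fun, Fintype.card_bool, smul_eq_mul] at htotal
  exact Nat.eq_of_mul_eq_mul_left (by positivity) htotal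

end Hypercube

/-- The minimum, over all all-pairs sets of paths `𝒫` in the Boolean
hypercube `Q_n`, of the vertex congestion of `𝒫` equals `2^{n−1} · (n + 2)`.  In
particular, there exists an all-pairs set of paths in `Q_n` with vertex congestion
exactly `2^{n−1} · (n + 2)`, and every all-pairs set of paths in `Q_n` has vertex
congestion at least `2^{n−1} · (n + 2)`. -/
theorem stmt18 (n : ℕ) (hn : 1 ≤ n) (Q : SimpleGraph (Fin n → Bool))
    (hQ : ∀ u v, Q.Adj u v ↔ (Finset.univ.filter fun i => u i ≠ v i).card = 1) :
    IsLeast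
      {g : ℕ | ∃ P : (Fin n → Bool) → (Fin n → Bool) → List (Fin n → Bool),
        (∀ u v, (P u v).head? = some u) ∧
        (∀ u v, (P u v).getLast? = some v) ∧
        (∀ u v, (P u v).Chain' Q.Adj) ∧
        (∀ u v, (P u v).Nodup) ∧
        (∀ u, P u u = [u]) ∧
        g = Finset.univ.sup
          (fun w => ∑ u : Fin n → Bool, ∑ v : Fin n → Bool, (P u v).count w)}
      (2 ^ (n - 1) * (n + 2)) := by
  have hadj : ∀ u v, Q.Adj u v ↔ hammingDist u v = 1 := hQ
  have : Nonempty (Fin n) := ⟨⟨0, hn⟩⟩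
  refine ⟨⟨coordPath, head?_coordPath, getLast?_coordPath,
    fun u v => (isChain_coordPath u v).imp fun x y h => (hadj x y).2 h, nodup_coordPath,
    coordPath_self, ?_⟩, ?_⟩
  · have hconst :
        congestion (coordPath (ι := Fin n) (β := Bool)) = fun _ => 2 ^ (n - 1) * (n + 2) :=
      funext fun w => by simpa using congestion_coordPath w
    change _ = univ.sup (congestion coordPath)
    rw [hconst, sup_const univ_nonempty (2 ^ (n - 1) * (n + 2))]
  · rintro g ⟨P, hhead, hlast, hchain, -, -, rfl⟩
    refine Nat.le_of_mul_le_mul_left ?_ (pow_pos two_pos n)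
    calc 2 ^ n * (2 ^ (n - 1) * (n + 2))
        = ∑ u : Fin n → Bool, ∑ v, (hammingDist u v + 1) := by
          simpa using (sum_sum_hammingDist_add_one (ι := Fin n)).symm
      _ ≤ ∑ u, ∑ v, (P u v).length := sum_le_sum fun u _ => sum_le_sum fun v _ =>
          hammingDist_lt_length ((hchain u v).imp fun x y h => ((hadj x y).1 h).le)
            (hhead u v) (hlast u v)
      _ = ∑ w, congestion P w := (sum_congestion P).symm
      _ ≤ 2 ^ n * univ.sup (congestion P) := by
          simpa using sum_le_card_nsmul univ (congestion P) _ fun w _ => le_sup (mem_univ w)
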